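/- For any Boolean function f and any variable x, the number of prime implicants of f is at least the maximum of the number of prime implicants of f|¬x and of f|x. More precisely, for each literal ℓ ∈ {x, ¬x}, the map sending a prime implicant t of f to the restriction t|ℓ (remove any literal on x after conditioning) induces a surjection from IP(f) onto the entailment-maximal elements of {t|ℓ : t ∈ IP(f)}, and IP(f|ℓ) equals that set of maximal elements; hence |IP(f|ℓ)| ≤ |IP(f)|. -/

import Mathlib

abbrev Term (V : Type*) := V → Option Bool

def Extends {V : Type*} (a : V → Bool) (t : Term V) : Prop :=
  ∀ v b, t v = some b → a v = b

def SubTerm {V : Type*} (s t : Term V) : Prop :=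
  ∀ v b, s v = some b → t v = some b

def Implicant {V : Type*} (f : (V → Bool) → Bool) (t : Term V) : Prop :=
  ∀ a, Extends a t → f a = true

def PrimeImplicant {V : Type*} (f : (V → Bool) → Bool) (t : Term V) : Prop :=
  Implicant f t ∧ ∀ s, SubTerm s t → Implicant f s → s = t

def IP {V : Type*} (f : (V → Bool) → Bool) : Set (Term V) :=
  {t | PrimeImplicant f t}

def Compatible {V : Type*} (t t' : Term V) : Prop :=
  ∀ v b b', t v = some b → t' v = some b' → b = b'

def combine {V : Type*} (t t' : Term V) : Term V :=
  fun v => (t v).orElse (fun _ => t' v)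

def maxSet {V : Type*} (S : Set (Term V)) : Set (Term V) :=
  {t ∈ S | ∀ t' ∈ S, SubTerm t' t → t' = t}

def fAnd {V : Type*} (f g : (V → Bool) → Bool) : (V → Bool) → Bool :=
  fun a => f a && g a

def restrict {V : Type*} [DecidableEq V] (f : (V → Bool) → Bool) (x : V) (b : Bool) :
    (V → Bool) → Bool :=
  fun a => f (Function.update a x b)

def SR {V : Type*} (f : (V → Bool) → Bool) (a : V → Bool) : Set (Term V) :=
  {t | PrimeImplicant f t ∧ Extends a t}

/-!
Every implicant `t` of `f|ₓ₌b` yields the implicant `t[x ↦ b]` of `f`, which contains a prime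
implicant `p` of `f` not using the literal `x = !b`; then `p[x ↦ none]` is an implicant of `f|ₓ₌b`
contained in `t`. So the terms `p[x ↦ none]` form a family of implicants of `f|ₓ₌b` lying below all
of them, and the prime implicants of `f|ₓ₌b` are exactly its minimal members. In particular they
are images of prime implicants of `f`, which bounds their number.
-/

namespace Term

variable {V : Type*}

theorem subTerm_trans {s t u : Term V} (hst : SubTerm s t) (htu : SubTerm t u) : SubTerm s u :=
  fun v b hv => htu v b (hst v b hv)

theorem subTerm_antisymm {s t : Term V} (hst : SubTerm s t) (hts : SubTerm t s) : s = t := by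
  funext v
  cases hs : s v with
  | some c => rw [hst v c hs]
  | none =>
    cases ht : t v with
    | none => rfl
    | some c => simpa [hs] using hts v c ht

def support [Fintype V] (t : Term V) : Finset V :=
  Finset.univ.filter fun v => t v ≠ none

theorem support_subset_support [Fintype V] {s t : Term V} (h : SubTerm s t) :
    s.support ⊆ t.support := by
  intro v hv
  simp only [support, Finset.mem_filter, Finset.mem_univ, true_and] at hv ⊢
  obtain ⟨c, hc⟩ := Option.ne_none_iff_exists'.mp hv
  simp [h v c hc]

theorem eq_of_subTerm_of_card_support_le [Fintype V] {s t : Term V} (h : SubTerm s t)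
    (hcard : t.support.card ≤ s.support.card) : s = t := by
  have hsupp : s.support = t.support :=
    Finset.eq_of_subset_of_card_le (support_subset_support h) hcard
  refine subTerm_antisymm h fun v c hv => ?_
  have hvs : v ∈ s.support := hsupp ▸ by simp [support, hv]
  simp only [support, Finset.mem_filter, Finset.mem_univ, true_and] at hvs
  obtain ⟨c', hc'⟩ := Option.ne_none_iff_exists'.mp hvs
  rw [hc', ← hv, h v c' hc']

-- A sub-implicant with fewest literals is prime.
theorem exists_primeImplicant_subTerm [Fintype V] {f : (V → Bool) → Bool} {t : Term V}
    (ht : Implicant f t) : ∃ p, PrimeImplicant f p ∧ SubTerm p t := by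
  classical
  obtain ⟨p, ⟨hpt, hp⟩, hmin⟩ := Set.exists_min_image {s | SubTerm s t ∧ Implicant f s}
    (fun s => s.support.card) (Set.toFinite _) ⟨t, fun _ _ h => h, ht⟩
  refine ⟨p, ⟨hp, fun s hsp hs => ?_⟩, hpt⟩
  exact eq_of_subTerm_of_card_support_le hsp (hmin s ⟨subTerm_trans hsp hpt, hs⟩)

-- `maxSet` is maximality for entailment, i.e. minimality for `SubTerm`.
theorem ip_eq_maxSet_of_forall_exists_subTerm {g : (V → Bool) → Bool} {S : Set (Term V)}
    (hS : ∀ s ∈ S, Implicant g s) (hcover : ∀ t, Implicant g t → ∃ s ∈ S, SubTerm s t) :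
    IP g = maxSet S := by
  ext t
  constructor
  · rintro ⟨ht, hprime⟩
    obtain ⟨s, hsS, hst⟩ := hcover t ht
    obtain rfl := hprime s hst (hS s hsS)
    exact ⟨hsS, fun s' hs' hs't => hprime s' hs't (hS s' hs')⟩
  · rintro ⟨htS, hmax⟩
    refine ⟨hS t htS, fun s hst hs => ?_⟩
    obtain ⟨s', hs'S, hs's⟩ := hcover s hs
    obtain rfl := hmax s' hs'S (subTerm_trans hs's hst)
    exact subTerm_antisymm hst hs's

variable [DecidableEq V] {f : (V → Bool) → Bool} {x : V} {b : Bool}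

theorem implicant_restrict_update_none {t : Term V} (ht : Implicant f t)
    (hx : t x ≠ some (!b)) : Implicant (restrict f x b) (Function.update t x none) := by
  intro a ha
  apply ht
  intro v c hv
  by_cases hvx : v = x
  · subst hvx
    obtain rfl : c = b := by cases c <;> cases b <;> simp_all
    simp
  · rw [Function.update_of_ne hvx]
    exact ha v c (by rwa [Function.update_of_ne hvx])

-- `f|ₓ₌b` ignores `x`, so any literal of `t` on `x` may be replaced by `x = b`.
theorem implicant_update_of_implicant_restrict {t : Term V} (ht : Implicant (restrict f x b) t) :
    Implicant f (Function.update t x (some b)) := by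
  intro a ha
  have hax : a x = b := ha x b (by simp)
  have ha' : Extends (Function.update a x ((t x).getD b)) t := by
    intro v c hv
    by_cases hvx : v = x
    · subst hvx; simp [hv]
    · rw [Function.update_of_ne hvx]
      exact ha v c (by rwa [Function.update_of_ne hvx])
  simpa [restrict, ← hax] using ht _ ha'

theorem exists_primeImplicant_update_none_subTerm [Fintype V] {t : Term V}
    (ht : Implicant (restrict f x b) t) :
    ∃ p ∈ IP f, p x ≠ some (!b) ∧ SubTerm (Function.update p x none) t := by
  obtain ⟨p, hp, hpt⟩ := exists_primeImplicant_subTerm (implicant_update_of_implicant_restrict ht)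
  refine ⟨p, hp, fun hpx => by simpa using hpt x _ hpx, fun v c hv => ?_⟩
  by_cases hvx : v = x
  · simp [hvx] at hv
  · rw [Function.update_of_ne hvx] at hv
    simpa [hvx] using hpt v c hv

end Term

/-- IP(f|ℓ) = max({t|ℓ : t ∈ IP(f), t consistent with ℓ}, ⊨),
hence |IP(f|ℓ)| ≤ |IP(f)|. -/
theorem stmt4 {V : Type*} [Fintype V] [DecidableEq V] (f : (V → Bool) → Bool)
    (x : V) (b : Bool) :
    IP (restrict f x b) =
      maxSet {s | ∃ t ∈ IP f, t x ≠ some (!b) ∧ s = Function.update t x none} ∧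
    (IP (restrict f x b)).ncard ≤ (IP f).ncard := by
  have hIP : IP (restrict f x b) =
      maxSet {s | ∃ t ∈ IP f, t x ≠ some (!b) ∧ s = Function.update t x none} := by
    refine Term.ip_eq_maxSet_of_forall_exists_subTerm ?_ fun t ht => ?_
    · rintro s ⟨p, hp, hpx, rfl⟩
      exact Term.implicant_restrict_update_none hp.1 hpx
    · obtain ⟨p, hp, hpx, hpt⟩ := Term.exists_primeImplicant_update_none_subTerm ht
      exact ⟨_, ⟨p, hp, hpx, rfl⟩, hpt⟩
  refine ⟨hIP, ?_⟩
  have hsub : IP (restrict f x b) ⊆ (Function.update · x none) '' IP f := by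
    rw [hIP]
    rintro s ⟨⟨p, hp, -, rfl⟩, -⟩
    exact ⟨p, hp, rfl⟩
  calc (IP (restrict f x b)).ncard ≤ ((Function.update · x none) '' IP f).ncard :=
        Set.ncard_le_ncard hsub (Set.toFinite _)
    _ ≤ (IP f).ncard := Set.ncard_image_le (Set.toFinite _)
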